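/- Let B ≥ 1 and let s_1, …, s_n ∈ (0, min{1, B/2}] be demand sizes. For every partition P of the index set {1, …, n} into classes on each of which the size is constant, the optimal value of the configuration LP relative to P is the same; in particular it equals the optimal value of the configuration LP relative to the partition into classes of equal size values. -/

import Mathlib

open scoped BigOperators

/-- Given demand sizes `s : Fin n → ℝ`, a partition of the index set into classes indexed
by `ι` (via the class map `p`, surjective so that every class is nonempty) on each of which
the size is constant with value `σ t` for class `t`, a `P`-configuration is a function
`c : ι → ℕ` with `Σ_t c t · σ t ≤ 1` and `Σ_t c t · σ t + max {σ t : c t > 0} ≤ B`. -/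
def IsPConfig {ι : Type} [Fintype ι] (B : ℝ) (σ : ι → ℝ) (c : ι → ℕ) : Prop :=
  (∑ t, (c t : ℝ) * σ t) ≤ 1 ∧ ∀ t, 0 < c t → (∑ t', (c t' : ℝ) * σ t') + σ t ≤ B

/-- The optimal value of the configuration LP relative to the partition with class map
`p : Fin n → ι` and class sizes `σ : ι → ℝ`: minimize `Σ_c x_c` over finitely supported
`x ≥ 0` on `P`-configurations with `Σ_c x_c · c t ≥ 2 · n_t` for every class `t`, where
`n_t` is the number of indices in class `t`. -/
noncomputable def LPvalue {n : ℕ} {ι : Type} [Fintype ι] (B : ℝ) (p : Fin n → ι)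
    (σ : ι → ℝ) : ℝ :=
  sInf {v | ∃ x : (ι → ℕ) →₀ ℝ,
    (∀ c, 0 ≤ x c) ∧
    (∀ c ∈ x.support, IsPConfig B σ c) ∧
    (∀ t, 2 * ((Nat.card {i : Fin n // p i = t} : ℝ)) ≤
      ∑ c ∈ x.support, x c * (c t : ℝ)) ∧
    (∑ c ∈ x.support, x c) = v}

/-!
A feasible solution of the configuration LP for one partition yields one for the other partition
with the same objective value, so both LPs minimise over the same set of values. To transfer a
solution from `P₂` to `P₁`, relabel each class `t₂` of `P₂` by a class `τ t₂` of `P₁` of the same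
size; relabelling and merging turns `P₂`-configurations into `P₁`-configurations. Drawing `τ` at
random, with `τ t₂ = t₁` independently with probability `n_{t₁} / #{i | s i = σ₁ t₁}`, and
averaging, every class `t₁` receives the same proportion of the coverage of the demands of its
size as it holds of those demands, hence at least `2 n_{t₁}`.
-/

open Finset

section ProductWeights

variable {α β R : Type*} [Fintype α] [DecidableEq α] [Fintype β] [CommSemiring R]
  {f : α → β → R}

theorem sum_pi_prod_eq_one (hf : ∀ a, ∑ b, f a b = 1) :
    ∑ τ : α → β, ∏ a, f a (τ a) = 1 := by
  simp [← Fintype.prod_sum, hf]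

theorem sum_pi_prod_filter_apply_eq [DecidableEq β] (hf : ∀ a, ∑ b, f a b = 1) (a : α) (b : β) :
    ∑ τ : α → β with τ a = b, ∏ a', f a' (τ a') = f a b := by
  have hfilter : ({τ : α → β | τ a = b} : Finset (α → β)) =
      Fintype.piFinset (Function.update (fun _ ↦ (univ : Finset β)) a {b}) := by
    ext τ
    simp only [mem_filter, mem_univ, true_and, Fintype.mem_piFinset]
    refine ⟨fun h a' ↦ ?_, fun h ↦ by simpa using h a⟩
    rcases eq_or_ne a' a with rfl | ha'
    · simpa using h
    · simp [ha']
  rw [hfilter, ← prod_univ_sum, ← mul_prod_erase _ _ (mem_univ a)]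
  rw [Function.update_self, sum_singleton, prod_eq_one fun a' ha' ↦ ?_, mul_one]
  rw [Function.update_of_ne (ne_of_mem_erase ha'), hf]

end ProductWeights

section Merge

variable {ι₁ ι₂ : Type}

def mergeConfig [Fintype ι₂] [DecidableEq ι₁] (τ : ι₂ → ι₁) (c : ι₂ → ℕ) (t₁ : ι₁) : ℕ :=
  ∑ t₂ with τ t₂ = t₁, c t₂

variable [Fintype ι₁] [Fintype ι₂] [DecidableEq ι₁]

theorem sum_mergeConfig_mul (τ : ι₂ → ι₁) (c : ι₂ → ℕ) (σ : ι₁ → ℝ) :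
    ∑ t₁, (mergeConfig τ c t₁ : ℝ) * σ t₁ = ∑ t₂, (c t₂ : ℝ) * σ (τ t₂) := by
  simp only [mergeConfig, Nat.cast_sum, sum_mul]
  rw [← sum_fiberwise univ τ fun t₂ ↦ (c t₂ : ℝ) * σ (τ t₂)]
  refine sum_congr rfl fun t₁ _ ↦ sum_congr rfl fun t₂ ht₂ ↦ ?_
  rw [(mem_filter.mp ht₂).2]

theorem isPConfig_mergeConfig {B : ℝ} {σ₁ : ι₁ → ℝ} {σ₂ : ι₂ → ℝ} {τ : ι₂ → ι₁}
    (hτ : ∀ t₂, σ₁ (τ t₂) = σ₂ t₂) {c : ι₂ → ℕ} (hc : IsPConfig B σ₂ c) :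
    IsPConfig B σ₁ (mergeConfig τ c) := by
  have hload : ∑ t₁, (mergeConfig τ c t₁ : ℝ) * σ₁ t₁ = ∑ t₂, (c t₂ : ℝ) * σ₂ t₂ := by
    simp only [sum_mergeConfig_mul, hτ]
  refine ⟨hload ▸ hc.1, fun t₁ ht₁ ↦ ?_⟩
  obtain ⟨t₂, ht₂, hpos⟩ := exists_ne_zero_of_sum_ne_zero ht₁.ne'
  rw [hload, ← (mem_filter.mp ht₂).2, hτ]
  exact hc.2 t₂ (Nat.pos_of_ne_zero hpos)

end Merge

theorem sum_support_mul_eq_linearCombination {α R : Type*} [Semiring R] (x : α →₀ R)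
    (f : α → R) : ∑ a ∈ x.support, x a * f a = Finsupp.linearCombination R f x := by
  rw [Finsupp.linearCombination_apply]
  rfl

section Average

variable {ι₁ ι₂ : Type} [Fintype ι₁] [Fintype ι₂] [DecidableEq ι₁] [DecidableEq ι₂]
  (w : ι₂ → ι₁ → ℝ) (x : (ι₂ → ℕ) →₀ ℝ)

/-- The expected merged solution when `τ t₂ = t₁` independently with probability `w t₂ t₁`. -/
noncomputable def averagedMerge : (ι₁ → ℕ) →₀ ℝ :=
  ∑ τ : ι₂ → ι₁, (∏ t₂, w t₂ (τ t₂)) • x.mapDomain (mergeConfig τ)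

theorem linearCombination_averagedMerge (f : (ι₁ → ℕ) → ℝ) :
    Finsupp.linearCombination ℝ f (averagedMerge w x) =
      ∑ τ : ι₂ → ι₁, (∏ t₂, w t₂ (τ t₂)) *
        Finsupp.linearCombination ℝ (f ∘ mergeConfig τ) x := by
  simp [averagedMerge, Finsupp.linearCombination_mapDomain]

theorem averagedMerge_nonneg (hw : ∀ t₂ t₁, 0 ≤ w t₂ t₁) (hx : 0 ≤ x) :
    0 ≤ averagedMerge w x :=
  sum_nonneg fun τ _ ↦ smul_nonneg (prod_nonneg fun t₂ _ ↦ hw t₂ (τ t₂))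
    (Finsupp.mapDomain_nonneg hx)

theorem exists_mergeConfig_of_mem_support_averagedMerge {c : ι₁ → ℕ}
    (hc : c ∈ (averagedMerge w x).support) :
    ∃ τ : ι₂ → ι₁, (∀ t₂, w t₂ (τ t₂) ≠ 0) ∧ ∃ c₂ ∈ x.support, mergeConfig τ c₂ = c := by
  obtain ⟨τ, -, hτ⟩ := Finsupp.mem_support_finsetSum c hc
  rw [Finsupp.mem_support_iff, Finsupp.smul_apply, smul_ne_zero_iff] at hτ
  refine ⟨τ, fun t₂ ↦ prod_ne_zero_iff.mp hτ.1 t₂ (mem_univ _), ?_⟩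
  simpa using Finsupp.mapDomain_support (Finsupp.mem_support_iff.mpr hτ.2)

variable {w}

theorem total_averagedMerge (hw : ∀ t₂, ∑ t₁, w t₂ t₁ = 1) :
    Finsupp.linearCombination ℝ (fun _ ↦ (1 : ℝ)) (averagedMerge w x) =
      Finsupp.linearCombination ℝ (fun _ ↦ (1 : ℝ)) x := by
  rw [linearCombination_averagedMerge]
  simp only [Function.comp_def]
  rw [← sum_mul, sum_pi_prod_eq_one hw, one_mul]

theorem coverage_averagedMerge (hw : ∀ t₂, ∑ t₁, w t₂ t₁ = 1) (t₁ : ι₁) :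
    Finsupp.linearCombination ℝ (fun c ↦ (c t₁ : ℝ)) (averagedMerge w x) =
      ∑ t₂, w t₂ t₁ * Finsupp.linearCombination ℝ (fun c ↦ (c t₂ : ℝ)) x := by
  have hmerge (τ : ι₂ → ι₁) :
      Finsupp.linearCombination ℝ (fun c ↦ (mergeConfig τ c t₁ : ℝ)) x =
        ∑ t₂ with τ t₂ = t₁, Finsupp.linearCombination ℝ (fun c ↦ (c t₂ : ℝ)) x := by
    simp only [Finsupp.linearCombination_apply, mergeConfig, Nat.cast_sum, smul_eq_mul,
      Finsupp.sum, mul_sum]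
    exact sum_comm
  simp only [linearCombination_averagedMerge, Function.comp_def, hmerge, mul_sum,
    sum_filter]
  rw [sum_comm]
  refine sum_congr rfl fun t₂ _ ↦ ?_
  rw [← sum_pi_prod_filter_apply_eq hw t₂ t₁, sum_mul, sum_filter]
  exact sum_congr rfl fun τ _ ↦ by split_ifs <;> simp

end Average

section LP

variable {n : ℕ} {ι ι₁ ι₂ : Type}

def IsLPFeasible [Fintype ι] (B : ℝ) (p : Fin n → ι) (σ : ι → ℝ) (x : (ι → ℕ) →₀ ℝ) : Prop :=
  0 ≤ x ∧ (∀ c ∈ x.support, IsPConfig B σ c) ∧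
    ∀ t, 2 * (Nat.card {i // p i = t} : ℝ) ≤ Finsupp.linearCombination ℝ (fun c ↦ (c t : ℝ)) x

def feasibleValues [Fintype ι] (B : ℝ) (p : Fin n → ι) (σ : ι → ℝ) : Set ℝ :=
  {v | ∃ x, IsLPFeasible B p σ x ∧ Finsupp.linearCombination ℝ (fun _ ↦ (1 : ℝ)) x = v}

theorem LPvalue_eq_sInf_feasibleValues [Fintype ι] (B : ℝ) (p : Fin n → ι) (σ : ι → ℝ) :
    LPvalue B p σ = sInf (feasibleValues B p σ) := by
  simp only [LPvalue, feasibleValues, IsLPFeasible, ← sum_support_mul_eq_linearCombination,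
    mul_one, and_assoc]
  rfl

theorem sum_card_fiber_eq_card [Fintype ι] {s : Fin n → ℝ} {p : Fin n → ι} {σ : ι → ℝ}
    (hσ : ∀ i, s i = σ (p i)) (v : ℝ) :
    ∑ t with σ t = v, (Nat.card {i // p i = t} : ℝ) = #{i | s i = v} := by
  classical
  rw [card_eq_sum_card_fiberwise (f := p) (t := {t | σ t = v}) fun i hi ↦ by
    simpa [← hσ] using hi]
  push_cast
  refine sum_congr rfl fun t ht ↦ ?_
  rw [Nat.card_eq_fintype_card, Fintype.card_subtype, filter_filter]
  congr 2
  ext i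
  simp only [mem_filter, mem_univ, true_and] at ht ⊢
  exact ⟨fun h ↦ ⟨by rw [hσ, h, ht], h⟩, And.right⟩

variable (s : Fin n → ℝ) (p₁ : Fin n → ι₁) (σ₁ : ι₁ → ℝ) (σ₂ : ι₂ → ℝ)

noncomputable def splitWeight (t₂ : ι₂) (t₁ : ι₁) : ℝ :=
  if σ₁ t₁ = σ₂ t₂ then Nat.card {i // p₁ i = t₁} / #{i | s i = σ₁ t₁} else 0

variable {s p₁ σ₁ σ₂}

theorem splitWeight_nonneg (t₂ : ι₂) (t₁ : ι₁) : 0 ≤ splitWeight s p₁ σ₁ σ₂ t₂ t₁ := by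
  unfold splitWeight
  split_ifs <;> positivity

theorem eq_of_splitWeight_ne_zero {t₂ : ι₂} {t₁ : ι₁}
    (h : splitWeight s p₁ σ₁ σ₂ t₂ t₁ ≠ 0) : σ₁ t₁ = σ₂ t₂ := by
  by_contra hne
  exact h (if_neg hne)

theorem sum_splitWeight_eq_one [Fintype ι₁] {p₂ : Fin n → ι₂} (hp₂ : Function.Surjective p₂)
    (hσ₁ : ∀ i, s i = σ₁ (p₁ i)) (hσ₂ : ∀ i, s i = σ₂ (p₂ i)) (t₂ : ι₂) :
    ∑ t₁, splitWeight s p₁ σ₁ σ₂ t₂ t₁ = 1 := by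
  obtain ⟨i, rfl⟩ := hp₂ t₂
  have hcard : (#{j | s j = σ₂ (p₂ i)} : ℝ) ≠ 0 :=
    Nat.cast_ne_zero.mpr (card_ne_zero_of_mem (by simpa using hσ₂ i))
  calc ∑ t₁, splitWeight s p₁ σ₁ σ₂ (p₂ i) t₁
      = (∑ t₁ with σ₁ t₁ = σ₂ (p₂ i), (Nat.card {j // p₁ j = t₁} : ℝ)) /
          #{j | s j = σ₂ (p₂ i)} := by
        rw [sum_div, sum_filter]
        refine sum_congr rfl fun t₁ _ ↦ ?_
        unfold splitWeight
        split_ifs with h <;> simp [h]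
    _ = 1 := by rw [sum_card_fiber_eq_card hσ₁, div_self hcard]

theorem sum_splitWeight_mul_card [Fintype ι₁] [Fintype ι₂] {p₂ : Fin n → ι₂}
    (hσ₁ : ∀ i, s i = σ₁ (p₁ i)) (hσ₂ : ∀ i, s i = σ₂ (p₂ i)) (t₁ : ι₁) :
    ∑ t₂, splitWeight s p₁ σ₁ σ₂ t₂ t₁ * Nat.card {i // p₂ i = t₂} =
      Nat.card {i // p₁ i = t₁} := by
  have hle : (Nat.card {i // p₁ i = t₁} : ℝ) ≤ #{i | s i = σ₁ t₁} := by
    rw [← sum_card_fiber_eq_card hσ₁]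
    exact single_le_sum (f := fun t ↦ (Nat.card {i // p₁ i = t} : ℝ))
      (fun _ _ ↦ Nat.cast_nonneg _) (mem_filter.mpr ⟨mem_univ t₁, rfl⟩)
  calc ∑ t₂, splitWeight s p₁ σ₁ σ₂ t₂ t₁ * Nat.card {i // p₂ i = t₂}
      = Nat.card {i // p₁ i = t₁} / #{i | s i = σ₁ t₁} *
          ∑ t₂ with σ₂ t₂ = σ₁ t₁, (Nat.card {i // p₂ i = t₂} : ℝ) := by
        rw [mul_sum, sum_filter]
        refine sum_congr rfl fun t₂ _ ↦ ?_
        rw [splitWeight, ite_mul, zero_mul]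
        exact if_congr eq_comm rfl rfl
    _ = Nat.card {i // p₁ i = t₁} := by
        rw [sum_card_fiber_eq_card hσ₂]
        refine div_mul_cancel_of_imp fun h ↦ ?_
        exact_mod_cast le_antisymm (h ▸ hle) (Nat.cast_nonneg _)

theorem feasibleValues_subset [Fintype ι₁] [Fintype ι₂] {B : ℝ} {p₂ : Fin n → ι₂}
    (hp₂ : Function.Surjective p₂)
    (hσ₁ : ∀ i, s i = σ₁ (p₁ i)) (hσ₂ : ∀ i, s i = σ₂ (p₂ i)) :
    feasibleValues B p₂ σ₂ ⊆ feasibleValues B p₁ σ₁ := by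
  classical
  rintro v ⟨x, ⟨hx_nonneg, hx_config, hx_cover⟩, rfl⟩
  have hw := sum_splitWeight_eq_one (p₁ := p₁) hp₂ hσ₁ hσ₂
  refine ⟨averagedMerge (splitWeight s p₁ σ₁ σ₂) x,
    ⟨averagedMerge_nonneg _ _ splitWeight_nonneg hx_nonneg, fun c hc ↦ ?_, fun t₁ ↦ ?_⟩,
    total_averagedMerge x hw⟩
  · obtain ⟨τ, hτ, c₂, hc₂, rfl⟩ := exists_mergeConfig_of_mem_support_averagedMerge _ _ hc
    exact isPConfig_mergeConfig (fun t₂ ↦ eq_of_splitWeight_ne_zero (hτ t₂)) (hx_config c₂ hc₂)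
  · rw [coverage_averagedMerge x hw, ← sum_splitWeight_mul_card hσ₁ hσ₂, mul_sum]
    refine sum_le_sum fun t₂ _ ↦ ?_
    rw [mul_left_comm]
    exact mul_le_mul_of_nonneg_left (hx_cover t₂) (splitWeight_nonneg t₂ t₁)

end LP

theorem stmt_15_general (B : ℝ) (n : ℕ) (s : Fin n → ℝ)
    {ι₁ ι₂ : Type} [Fintype ι₁] [Fintype ι₂]
    (p₁ : Fin n → ι₁) (σ₁ : ι₁ → ℝ) (hp₁ : Function.Surjective p₁)
    (hσ₁ : ∀ i, s i = σ₁ (p₁ i))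
    (p₂ : Fin n → ι₂) (σ₂ : ι₂ → ℝ) (hp₂ : Function.Surjective p₂)
    (hσ₂ : ∀ i, s i = σ₂ (p₂ i)) :
    LPvalue B p₁ σ₁ = LPvalue B p₂ σ₂ := by
  rw [LPvalue_eq_sInf_feasibleValues, LPvalue_eq_sInf_feasibleValues,
    (feasibleValues_subset hp₂ hσ₁ hσ₂).antisymm (feasibleValues_subset hp₁ hσ₂ hσ₁)]

/-- For demand sizes `s 1, …, s n` in `(0, min 1 (B/2)]`, the optimal value of the
configuration LP relative to a partition of the index set into classes on each of which the
size is constant does not depend on the partition: any two such partitions (in particular,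
the partition into classes of equal size values) give the same optimal value. -/
theorem stmt_15 (B : ℝ) (hB : 1 ≤ B) (n : ℕ) (s : Fin n → ℝ)
    (hs : ∀ i, 0 < s i ∧ s i ≤ min 1 (B / 2))
    {ι₁ ι₂ : Type} [Fintype ι₁] [Fintype ι₂]
    (p₁ : Fin n → ι₁) (σ₁ : ι₁ → ℝ) (hp₁ : Function.Surjective p₁)
    (hσ₁ : ∀ i, s i = σ₁ (p₁ i))
    (p₂ : Fin n → ι₂) (σ₂ : ι₂ → ℝ) (hp₂ : Function.Surjective p₂)
    (hσ₂ : ∀ i, s i = σ₂ (p₂ i)) :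
    LPvalue B p₁ σ₁ = LPvalue B p₂ σ₂ :=
  stmt_15_general B n s p₁ σ₁ hp₁ hσ₁ p₂ σ₂ hp₂ hσ₂
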